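/- arXiv:2108.11352 — 6 statements merged into one kernel-verified Lean document; each statement's English description precedes it below -/
import Mathlib

section
/- Under the assumptions that A − iBᵀTB is invertible and BBᵀ = Id, the scattering matrix S := Id + 2iB(A − iBᵀTB)⁻¹BᵀT admits the alternative expression S = B(A − iBᵀTB)⁻¹(A + iBᵀTB)Bᵀ. -/
open Matrix

/-- Alternative expression for the scattering matrix:
`Id + 2iB(A − iBᴴTB)⁻¹BᴴT = B(A − iBᴴTB)⁻¹(A + iBᴴTB)Bᴴ` when `BBᴴ = Id` and
`A − iBᴴTB` is invertible. -/
theorem stmt5 {N M : ℕ} (A : Matrix (Fin N) (Fin N) ℂ)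
    (B : Matrix (Fin M) (Fin N) ℂ) (T : Matrix (Fin M) (Fin M) ℂ)
    (hB : B * Bᴴ = 1) (hT : IsUnit T)
    (hinv : IsUnit (A - Complex.I • (Bᴴ * T * B))) :
    1 + (2 * Complex.I) • (B * (A - Complex.I • (Bᴴ * T * B))⁻¹ * Bᴴ * T)
      = B * (A - Complex.I • (Bᴴ * T * B))⁻¹ * (A + Complex.I • (Bᴴ * T * B)) * Bᴴ := by
  set D := A - Complex.I • (Bᴴ * T * B) with hD
  have h1 : D⁻¹ * D = 1 := nonsing_inv_mul _ ((isUnit_iff_isUnit_det D).mp hinv)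
  have h2 : A + Complex.I • (Bᴴ * T * B) = D + (2 * Complex.I) • (Bᴴ * T * B) := by
    rw [hD]; module
  rw [h2]
  simp only [Matrix.mul_add, Matrix.add_mul, Matrix.mul_smul, Matrix.smul_mul,
    Matrix.mul_assoc]
  rw [← Matrix.mul_assoc D⁻¹ D, h1, Matrix.one_mul, hB]
  simp [Matrix.mul_one]
end

section
/- Energy conservation for the scattering matrix: with S := Id + 2iB(A − iBᵀTB)⁻¹BᵀT and v := (A − iBᵀTB)⁻¹BᵀT p, one has ‖Sp‖_T² + 4𝒫(v) = ‖p‖_T² for all p, where 𝒫(v) := −Im(v̄ᵀAv). In particular if 𝒫(v) ≥ 0 for all v then ‖Sp‖_T ≤ ‖p‖_T, i.e., S is non-expansive in the T-norm. -/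
open Matrix ComplexOrder

/-- The `T`-norm `‖x‖_T = √(xᴴTx)`. -/
noncomputable def Tnorm {n : ℕ} (T : Matrix (Fin n) (Fin n) ℂ) (x : Fin n → ℂ) : ℝ :=
  Real.sqrt (star x ⬝ᵥ T *ᵥ x).re

lemma herm_swap {n : ℕ} {T : Matrix (Fin n) (Fin n) ℂ} (hT : T.IsHermitian)
    (x y : Fin n → ℂ) : star (star x ⬝ᵥ T *ᵥ y) = star y ⬝ᵥ T *ᵥ x := by
  rw [star_dotProduct, star_star, star_mulVec, hT.eq, dotProduct_mulVec]

/-- Energy conservation for the scattering matrix: with `S = Id + 2iB(A − iBᴴTB)⁻¹BᴴT` and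
`v = (A − iBᴴTB)⁻¹BᴴT p`, one has `‖Sp‖_T² + 4𝒫(v) = ‖p‖_T²` where `𝒫(v) = −Im(v̄ᵀAv)`;
in particular `‖Sp‖_T ≤ ‖p‖_T`. -/
theorem stmt6 {N M : ℕ} (A : Matrix (Fin N) (Fin N) ℂ)
    (B : Matrix (Fin M) (Fin N) ℂ) (T : Matrix (Fin M) (Fin M) ℂ)
    (hA : ∀ u : Fin N → ℂ, (star u ⬝ᵥ A *ᵥ u).im ≤ 0)
    (hB : B * Bᴴ = 1) (hT : T.PosDef)
    (hinv : IsUnit (A - Complex.I • (Bᴴ * T * B)))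
    (S : Matrix (Fin M) (Fin M) ℂ)
    (hS : S = 1 + (2 * Complex.I) • (B * (A - Complex.I • (Bᴴ * T * B))⁻¹ * Bᴴ * T)) :
    ∀ (p : Fin M → ℂ) (v : Fin N → ℂ),
      v = (A - Complex.I • (Bᴴ * T * B))⁻¹ *ᵥ (Bᴴ *ᵥ (T *ᵥ p)) →
      (star (S *ᵥ p) ⬝ᵥ T *ᵥ (S *ᵥ p)).re + 4 * (-(star v ⬝ᵥ A *ᵥ v).im)
        = (star p ⬝ᵥ T *ᵥ p).re ∧
      Tnorm T (S *ᵥ p) ≤ Tnorm T p := by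
  intro p v hv
  set C : Matrix (Fin N) (Fin N) ℂ := A - Complex.I • (Bᴴ * T * B) with hC
  have hdet : IsUnit C.det := (Matrix.isUnit_iff_isUnit_det C).mp hinv
  -- C v = Bᴴ T p
  have hCv : C *ᵥ v = Bᴴ *ᵥ (T *ᵥ p) := by
    rw [hv, mulVec_mulVec, Matrix.mul_nonsing_inv _ hdet, one_mulVec]
  have hAv : A *ᵥ v = Bᴴ *ᵥ (T *ᵥ p) + Complex.I • ((Bᴴ * T * B) *ᵥ v) := by
    have := hCv
    rw [hC, sub_mulVec, smul_mulVec] at this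
    linear_combination (norm := module) this
  set q : Fin M → ℂ := B *ᵥ v with hq
  set a : ℂ := star v ⬝ᵥ A *ᵥ v with haa
  set α : ℂ := star q ⬝ᵥ T *ᵥ p with hα
  set τ : ℂ := star q ⬝ᵥ T *ᵥ q with hτ
  have hstarv : ∀ x : Fin M → ℂ, star v ⬝ᵥ (Bᴴ *ᵥ x) = star q ⬝ᵥ x := by
    intro x
    rw [dotProduct_mulVec, ← star_mulVec]
  have ha : a = α + Complex.I * τ := by
    rw [haa, hAv, dotProduct_add, dotProduct_smul, hstarv, smul_eq_mul]
    congr 1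
    have : (Bᴴ * T * B) *ᵥ v = Bᴴ *ᵥ (T *ᵥ (B *ᵥ v)) := by
      rw [mulVec_mulVec, mulVec_mulVec]
    rw [this, hstarv, hq]
  have hτstar : star τ = τ := herm_swap hT.1 q q
  have hαstar : star α = star p ⬝ᵥ T *ᵥ q := herm_swap hT.1 q p
  -- S p = p + 2i q
  have hSp : S *ᵥ p = p + (2 * Complex.I) • q := by
    rw [hS, add_mulVec, one_mulVec, smul_mulVec]
    congr 1
    rw [hq, hv]
    simp only [mulVec_mulVec, Matrix.mul_assoc]
  -- expand the quadratic form
  have key : star (S *ᵥ p) ⬝ᵥ T *ᵥ (S *ᵥ p)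
      = star p ⬝ᵥ T *ᵥ p + 2 * Complex.I * (star a - a) := by
    rw [hSp]
    have expand : star (p + (2 * Complex.I) • q) ⬝ᵥ T *ᵥ (p + (2 * Complex.I) • q)
        = star p ⬝ᵥ T *ᵥ p + (2 * Complex.I) * (star p ⬝ᵥ T *ᵥ q)
          + star (2 * Complex.I) * α + (star (2 * Complex.I) * (2 * Complex.I)) * τ := by
      simp only [star_add, star_smul, mulVec_add, mulVec_smul, add_dotProduct,
        dotProduct_add, smul_dotProduct, dotProduct_smul, smul_eq_mul, hα, hτ]
      ring
    rw [expand, ← hαstar]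
    have h1 : α = a - Complex.I * τ := by rw [ha]; ring
    have h2 : star α = star a + Complex.I * τ := by
      rw [h1, star_sub, star_mul', hτstar, Complex.star_def, Complex.conj_I]; ring
    rw [h2, h1]
    have hst : star (2 * Complex.I) = -(2 * Complex.I) := by
      simp [Complex.star_def, Complex.conj_I]
    rw [hst]
    ring
  have hre : (star (S *ᵥ p) ⬝ᵥ T *ᵥ (S *ᵥ p)).re = (star p ⬝ᵥ T *ᵥ p).re + 4 * a.im := by
    rw [key, Complex.add_re]
    congr 1
    simp [Complex.mul_re, Complex.mul_im, Complex.sub_re, Complex.sub_im]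
    ring
  have him : a.im ≤ 0 := hA v
  constructor
  · rw [hre, haa]; ring
  · unfold Tnorm
    apply Real.sqrt_le_sqrt
    rw [hre]
    nlinarith [him]
end

section
/- Coercivity: let Π be a T-isometric involution and S a T-non-expansive matrix on ℂ^M (finite-dimensional) such that Id + ΠS is injective. Then there exists α > 0 such that Re((p, (Id + ΠS)p)_T) ≥ α ‖p‖_T² for all p ∈ ℂ^M. -/
/-!
Write `A = 1 + Ex * S` and `‖·‖_T` for the `T`-norm. Expanding `‖A p‖_T²` gives
`2 Re (p, A p)_T = ‖A p‖_T² + ‖p‖_T² - ‖Ex S p‖_T² ≥ ‖A p‖_T²`,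
since `Ex S` is `T`-non-expansive.
As `A` is injective, `p ↦ ‖A p‖_T²` is the quadratic form of the positive definite matrix
`Aᴴ T A`, and any two positive definite quadratic forms on a finite-dimensional space are
comparable (minimise their quotient on the unit sphere).
-/

open Matrix ComplexOrder

theorem exists_pos_mul_le_of_homogeneous {E : Type*} [NormedAddCommGroup E] [NormedSpace ℝ E]
    [ProperSpace E] {f g : E → ℝ} (hf : Continuous f) (hg : Continuous g)
    (hf_smul : ∀ (c : ℝ) (x : E), f (c • x) = c ^ 2 * f x)
    (hg_smul : ∀ (c : ℝ) (x : E), g (c • x) = c ^ 2 * g x)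
    (hf_pos : ∀ x ≠ 0, 0 < f x) (hg_pos : ∀ x ≠ 0, 0 < g x) :
    ∃ α > 0, ∀ x, α * g x ≤ f x := by
  have h_zero {h : E → ℝ} (h_smul : ∀ (c : ℝ) (x : E), h (c • x) = c ^ 2 * h x) : h 0 = 0 := by
    simpa using h_smul 0 0
  rcases subsingleton_or_nontrivial E with _ | _
  · exact ⟨1, one_pos, fun x => by simp [Subsingleton.elim x 0, h_zero hf_smul, h_zero hg_smul]⟩
  have h_sphere : ∀ u ∈ Metric.sphere (0 : E) 1, u ≠ 0 := fun u hu =>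
    ne_zero_of_mem_unit_sphere ⟨u, hu⟩
  obtain ⟨u, hu, hu_min⟩ := (isCompact_sphere (0 : E) 1).exists_isMinOn
    (NormedSpace.sphere_nonempty.2 zero_le_one)
    (hf.continuousOn.div hg.continuousOn fun v hv => (hg_pos v (h_sphere v hv)).ne')
  refine ⟨f u / g u, div_pos (hf_pos u (h_sphere u hu)) (hg_pos u (h_sphere u hu)), fun x => ?_⟩
  rcases eq_or_ne x 0 with rfl | hx
  · simp [h_zero hf_smul, h_zero hg_smul]
  set v := ‖x‖⁻¹ • x
  have hv : v ∈ Metric.sphere (0 : E) 1 := by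
    simp [v, norm_smul, inv_mul_cancel₀ (norm_ne_zero_iff.2 hx)]
  have hx_eq : x = ‖x‖ • v := (smul_inv_smul₀ (norm_ne_zero_iff.2 hx) x).symm
  have hv_le : f u / g u * g v ≤ f v :=
    (le_div_iff₀ (hg_pos v (h_sphere v hv))).1 (hu_min hv)
  rw [hx_eq, hf_smul, hg_smul]
  nlinarith [sq_nonneg ‖x‖]

variable {n : Type*} [Fintype n]

theorem continuous_re_star_dotProduct_mulVec (Q : Matrix n n ℂ) :
    Continuous fun x : n → ℂ => (star x ⬝ᵥ Q *ᵥ x).re := by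
  fun_prop

theorem re_star_dotProduct_mulVec_smul (Q : Matrix n n ℂ) (c : ℝ) (x : n → ℂ) :
    (star (c • x) ⬝ᵥ Q *ᵥ (c • x)).re = c ^ 2 * (star x ⬝ᵥ Q *ᵥ x).re := by
  rw [mulVec_smul, star_smul, smul_dotProduct, dotProduct_smul, star_trivial, smul_smul,
    Complex.smul_re, smul_eq_mul, sq]

theorem Matrix.PosDef.re_star_dotProduct_mulVec_pos {Q : Matrix n n ℂ} (hQ : Q.PosDef)
    {x : n → ℂ} (hx : x ≠ 0) : 0 < (star x ⬝ᵥ Q *ᵥ x).re :=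
  (Complex.pos_iff.1 (hQ.dotProduct_mulVec_pos hx)).1

theorem Matrix.PosDef.exists_pos_mul_le {P Q : Matrix n n ℂ} (hP : P.PosDef) (hQ : Q.PosDef) :
    ∃ β > 0, ∀ x : n → ℂ, β * (star x ⬝ᵥ P *ᵥ x).re ≤ (star x ⬝ᵥ Q *ᵥ x).re :=
  exists_pos_mul_le_of_homogeneous (continuous_re_star_dotProduct_mulVec Q)
    (continuous_re_star_dotProduct_mulVec P) (re_star_dotProduct_mulVec_smul Q)
    (re_star_dotProduct_mulVec_smul P) (fun _ => hQ.re_star_dotProduct_mulVec_pos)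
    (fun _ => hP.re_star_dotProduct_mulVec_pos)

theorem Matrix.IsHermitian.re_star_dotProduct_mulVec_comm {T : Matrix n n ℂ}
    (hT : T.IsHermitian) (x y : n → ℂ) : (star x ⬝ᵥ T *ᵥ y).re = (star y ⬝ᵥ T *ᵥ x).re := by
  rw [← Complex.conj_re, ← RCLike.star_def, star_dotProduct, star_star, star_mulVec,
    ← dotProduct_mulVec, hT.eq]

theorem re_star_dotProduct_mulVec_one_add_le [DecidableEq n] {T K : Matrix n n ℂ}
    (hT : T.IsHermitian)
    (hK : ∀ x : n → ℂ, (star (K *ᵥ x) ⬝ᵥ T *ᵥ (K *ᵥ x)).re ≤ (star x ⬝ᵥ T *ᵥ x).re)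
    (p : n → ℂ) :
    (star ((1 + K) *ᵥ p) ⬝ᵥ T *ᵥ ((1 + K) *ᵥ p)).re ≤
      2 * (star ((1 + K) *ᵥ p) ⬝ᵥ T *ᵥ p).re := by
  have h_comm := hT.re_star_dotProduct_mulVec_comm p (K *ᵥ p)
  simp only [add_mulVec, one_mulVec, star_add, mulVec_add, add_dotProduct, dotProduct_add,
    Complex.add_re] at h_comm ⊢
  linarith [hK p]

theorem stmt8_general {M : ℕ} (T Ex S : Matrix (Fin M) (Fin M) ℂ) (hT : T.PosDef)
    (hExIso : ∀ x : Fin M → ℂ,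
      (star (Ex *ᵥ x) ⬝ᵥ T *ᵥ (Ex *ᵥ x)).re = (star x ⬝ᵥ T *ᵥ x).re)
    (hSne : ∀ x : Fin M → ℂ,
      (star (S *ᵥ x) ⬝ᵥ T *ᵥ (S *ᵥ x)).re ≤ (star x ⬝ᵥ T *ᵥ x).re)
    (hinj : Function.Injective (1 + Ex * S).mulVec) :
    ∃ α > (0:ℝ), ∀ p : Fin M → ℂ,
      α * (star p ⬝ᵥ T *ᵥ p).re ≤ (star ((1 + Ex * S) *ᵥ p) ⬝ᵥ T *ᵥ p).re := by
  set A := 1 + Ex * S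
  have h_contr (x : Fin M → ℂ) :
      (star ((Ex * S) *ᵥ x) ⬝ᵥ T *ᵥ ((Ex * S) *ᵥ x)).re ≤ (star x ⬝ᵥ T *ᵥ x).re := by
    rw [← mulVec_mulVec, hExIso]
    exact hSne x
  obtain ⟨β, hβ, h_comp⟩ := hT.exists_pos_mul_le (hT.conjTranspose_mul_mul_same hinj)
  refine ⟨β / 2, half_pos hβ, fun p => ?_⟩
  have h_form : star p ⬝ᵥ (Aᴴ * T * A) *ᵥ p = star (A *ᵥ p) ⬝ᵥ T *ᵥ (A *ᵥ p) := by
    simp only [star_mulVec, dotProduct_mulVec, vecMul_vecMul]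
  have h_le := h_comp p
  rw [h_form] at h_le
  linarith [re_star_dotProduct_mulVec_one_add_le hT.isHermitian h_contr p]

/-- Coercivity: if `Ex` is a `T`-isometric involution, `S` is `T`-non-expansive and
`Id + Ex·S` is injective, then there is `α > 0` with
`Re((p,(Id + Ex·S)p)_T) ≥ α‖p‖_T²` for all `p`, where `(x,y)_T = ȳᵀTx`. -/
theorem stmt8 {M : ℕ} (T Ex S : Matrix (Fin M) (Fin M) ℂ) (hT : T.PosDef)
    (hEx : Ex * Ex = 1)
    (hExIso : ∀ x : Fin M → ℂ,
      (star (Ex *ᵥ x) ⬝ᵥ T *ᵥ (Ex *ᵥ x)).re = (star x ⬝ᵥ T *ᵥ x).re)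
    (hSne : ∀ x : Fin M → ℂ,
      (star (S *ᵥ x) ⬝ᵥ T *ᵥ (S *ᵥ x)).re ≤ (star x ⬝ᵥ T *ᵥ x).re)
    (hinj : Function.Injective (1 + Ex * S).mulVec) :
    ∃ α > (0:ℝ), ∀ p : Fin M → ℂ,
      α * (star p ⬝ᵥ T *ᵥ p).re ≤ (star ((1 + Ex * S) *ᵥ p) ⬝ᵥ T *ᵥ p).re :=
  stmt8_general T Ex S hT hExIso hSne hinj
end

section
/- Key inequality step in the coercivity proof: if ‖Sp‖_T ≤ ‖p‖_T, ‖Πx‖_T = ‖x‖_T, and Re((p, (Id + ΠS)p)_T) = 0 for some p, then ‖(Id + ΠS)p‖_T = 0; consequently, whenever Id + ΠS is injective, Re((p, (Id + ΠS)p)_T) > 0 for all p ≠ 0. -/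
/-!
With `e = ΠSp` we have `‖e‖_T ≤ ‖p‖_T`, and expanding `‖e‖² = ‖(p + e) - p‖²` gives
`2 Re((p + e, p)_T) = ‖p + e‖_T² + ‖p‖_T² - ‖e‖_T² ≥ ‖p + e‖_T²`. So the real part controls
`‖(Id + ΠS)p‖_T²`; when it vanishes so does `(Id + ΠS)p`, which is impossible for `p ≠ 0`
if `Id + ΠS` is injective.
-/

open Matrix ComplexOrder

section InnerProductSpace

open RCLike

variable {𝕜 E : Type*} [RCLike 𝕜] [SeminormedAddCommGroup E] [InnerProductSpace 𝕜 E]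

theorem norm_add_sq_le_two_mul_re_inner_of_norm_le {p e : E} (h : ‖e‖ ≤ ‖p‖) :
    ‖p + e‖ ^ 2 ≤ 2 * re (inner 𝕜 (p + e) p) := by
  have hsub : ‖e‖ ^ 2 = ‖p + e‖ ^ 2 - 2 * re (inner 𝕜 (p + e) p) + ‖p‖ ^ 2 := by
    rw [← @norm_sub_sq 𝕜, add_sub_cancel_left]
  nlinarith [norm_nonneg e]

end InnerProductSpace

theorem Matrix.PosDef.eq_zero_of_Tnorm_eq_zero {n : ℕ} {T : Matrix (Fin n) (Fin n) ℂ}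
    (hT : T.PosDef) {x : Fin n → ℂ} (hx : Tnorm T x = 0) : x = 0 := by
  by_contra hne
  exact (Real.sqrt_pos.mpr (hT.re_dotProduct_pos hne)).ne' hx

theorem Matrix.PosSemidef.Tnorm_add_sq_le {n : ℕ} {T : Matrix (Fin n) (Fin n) ℂ}
    (hT : T.PosSemidef) {p e : Fin n → ℂ} (h : Tnorm T e ≤ Tnorm T p) :
    Tnorm T (p + e) ^ 2 ≤ 2 * (star (p + e) ⬝ᵥ T *ᵥ p).re := by
  -- Passed explicitly: instance search on `Fin n → ℂ` would find the sup norm instead.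
  let normedT := T.toSeminormedAddCommGroup hT
  have hnorm : ∀ x, Tnorm T x = @norm _ normedT.toNorm x := fun x => by
    rw [Tnorm, dotProduct_comm]; rfl
  rw [hnorm, hnorm] at h
  rw [hnorm, dotProduct_comm]
  exact @norm_add_sq_le_two_mul_re_inner_of_norm_le ℂ _ _ normedT (T.toInnerProductSpace hT) p e h

theorem stmt9_general {M : ℕ} (T Ex S : Matrix (Fin M) (Fin M) ℂ) (hT : T.PosDef)
    (hExIso : ∀ x : Fin M → ℂ, Tnorm T (Ex *ᵥ x) = Tnorm T x)
    (hSne : ∀ x : Fin M → ℂ, Tnorm T (S *ᵥ x) ≤ Tnorm T x) :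
    (∀ p : Fin M → ℂ,
      (star ((1 + Ex * S) *ᵥ p) ⬝ᵥ T *ᵥ p).re = 0 →
        Tnorm T ((1 + Ex * S) *ᵥ p) = 0) ∧
    (Function.Injective (1 + Ex * S).mulVec →
      ∀ p : Fin M → ℂ, p ≠ 0 → 0 < (star ((1 + Ex * S) *ᵥ p) ⬝ᵥ T *ᵥ p).re) := by
  have key : ∀ p : Fin M → ℂ,
      Tnorm T ((1 + Ex * S) *ᵥ p) ^ 2 ≤ 2 * (star ((1 + Ex * S) *ᵥ p) ⬝ᵥ T *ᵥ p).re := by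
    intro p
    rw [add_mulVec, one_mulVec, ← mulVec_mulVec]
    exact hT.posSemidef.Tnorm_add_sq_le ((hExIso _).trans_le (hSne p))
  have vanish : ∀ p : Fin M → ℂ, (star ((1 + Ex * S) *ᵥ p) ⬝ᵥ T *ᵥ p).re = 0 →
      Tnorm T ((1 + Ex * S) *ᵥ p) = 0 := fun p h0 =>
    pow_eq_zero_iff (n := 2) two_ne_zero |>.mp <|
      le_antisymm (by simpa [h0] using key p) (sq_nonneg _)
  refine ⟨vanish, fun hinj p hp => ?_⟩
  refine lt_of_le_of_ne (by nlinarith [key p]) fun h0 => hp (hinj ?_)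
  rw [hT.eq_zero_of_Tnorm_eq_zero (vanish p h0.symm), mulVec_zero]

/-- Key inequality step: for a `T`-isometric involution `Ex` and a `T`-non-expansive `S`,
if `Re((p,(Id+Ex·S)p)_T) = 0` then `‖(Id+Ex·S)p‖_T = 0`; consequently, whenever
`Id + Ex·S` is injective, `Re((p,(Id+Ex·S)p)_T) > 0` for all `p ≠ 0`. -/
theorem stmt9 {M : ℕ} (T Ex S : Matrix (Fin M) (Fin M) ℂ) (hT : T.PosDef)
    (hEx : Ex * Ex = 1)
    (hExIso : ∀ x : Fin M → ℂ, Tnorm T (Ex *ᵥ x) = Tnorm T x)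
    (hSne : ∀ x : Fin M → ℂ, Tnorm T (S *ᵥ x) ≤ Tnorm T x) :
    (∀ p : Fin M → ℂ,
      (star ((1 + Ex * S) *ᵥ p) ⬝ᵥ T *ᵥ p).re = 0 →
        Tnorm T ((1 + Ex * S) *ᵥ p) = 0) ∧
    (Function.Injective (1 + Ex * S).mulVec →
      ∀ p : Fin M → ℂ, p ≠ 0 → 0 < (star ((1 + Ex * S) *ᵥ p) ⬝ᵥ T *ᵥ p).re) :=
  stmt9_general T Ex S hT hExIso hSne
end

section
/- Cayley-transform form of the scattering matrix: decompose A in block form A = [[A_II, A_IB],[A_BI, A_BB]] with A_II invertible, set Ã := T⁻¹(A_BB − A_BI A_II⁻¹ A_IB). Then Ã − iId is invertible and the scattering matrix S = B(A − iBᵀTB)⁻¹(A + iBᵀTB)Bᵀ equals (Ã − iId)⁻¹(Ã + iId), where B is the boolean restriction to the second (boundary) block. -/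
/-!
Writing `P = Bᴴ T B`, we have `A + iP = (A - iP) + 2iP`, so with `B Bᴴ = 1` the scattering
matrix is `S = 1 + 2i (B (A - iP)⁻¹ Bᴴ) T`. The middle factor is the lower-right block of the
inverse of the block matrix `A - iP`, i.e. the inverse of its Schur complement
`A_BB - iT - A_BI A_II⁻¹ A_IB`, which equals `T (Ã - i)`. Hence `S = 1 + 2i (Ã - i)⁻¹ = (Ã - i)⁻¹ (Ã + i)`.
-/

open Matrix

/-- The boolean restriction matrix onto the boundary (second) block of coordinates. -/
def Bbd (n m : ℕ) : Matrix (Fin m) (Fin n ⊕ Fin m) ℂ :=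
  Matrix.of fun i x => Sum.elim (fun _ => (0:ℂ)) (fun j => if i = j then 1 else 0) x

namespace Matrix

variable {ι κ K : Type*} [Fintype ι] [DecidableEq ι] [Fintype κ] [DecidableEq κ] [Field K]

theorem toBlocks₂₂_inv_fromBlocks {A : Matrix ι ι K} {B : Matrix ι κ K} {C : Matrix κ ι K}
    {D : Matrix κ κ K} (hA : IsUnit A) (hM : IsUnit (fromBlocks A B C D)) :
    (fromBlocks A B C D)⁻¹.toBlocks₂₂ = (D - C * A⁻¹ * B)⁻¹ := by
  let := hA.invertible
  let := hM.invertible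
  let := (isUnit_fromBlocks_iff_of_invertible₁₁.mp hM).invertible
  rw [← invOf_eq_nonsing_inv, invOf_fromBlocks₁₁_eq, toBlocks_fromBlocks₂₂, invOf_eq_nonsing_inv,
    invOf_eq_nonsing_inv]

theorem mul_inv_sub_smul_mul_add_smul_mul (R : Matrix κ ι K) (L : Matrix ι κ K)
    (A : Matrix ι ι K) (T : Matrix κ κ K) (c : K) (hRL : R * L = 1)
    (hM : IsUnit (A - c • (L * T * R))) :
    R * (A - c • (L * T * R))⁻¹ * (A + c • (L * T * R)) * L
      = 1 + (2 * c) • (R * (A - c • (L * T * R))⁻¹ * L * T) := by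
  set M := A - c • (L * T * R)
  have hsplit : A + c • (L * T * R) = M + (2 * c) • (L * T * R) := by
    simp only [M, two_mul, add_smul]
    abel
  have hMM : M⁻¹ * M = 1 := nonsing_inv_mul M ((isUnit_iff_isUnit_det M).mp hM)
  rw [hsplit, Matrix.mul_add, Matrix.add_mul, Matrix.mul_assoc R, hMM, Matrix.mul_one, hRL]
  simp only [Matrix.mul_smul, Matrix.smul_mul, Matrix.mul_assoc, hRL, Matrix.mul_one]

theorem inv_sub_smul_one_mul_add_smul_one {X : Matrix ι ι K} {c : K}
    (hX : IsUnit (X - c • 1)) :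
    (X - c • 1)⁻¹ * (X + c • 1) = 1 + (2 * c) • (X - c • 1)⁻¹ := by
  simpa using mul_inv_sub_smul_mul_add_smul_mul 1 1 X 1 c (Matrix.mul_one 1) (by simpa using hX)

end Matrix

section Boundary

variable (n m : ℕ)

theorem Bbd_eq_fromCols : Bbd n m = fromCols 0 1 := by
  ext i x
  cases x <;> simp [Bbd, one_apply]

theorem conjTranspose_Bbd : (Bbd n m)ᴴ = fromRows 0 1 := by
  simp [Bbd_eq_fromCols, conjTranspose_fromCols_eq_fromRows_conjTranspose]

theorem Bbd_mul_conjTranspose_Bbd : Bbd n m * (Bbd n m)ᴴ = 1 := by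
  rw [conjTranspose_Bbd, Bbd_eq_fromCols, fromCols_mul_fromRows]
  simp

theorem Bbd_mul_mul_conjTranspose_Bbd (M : Matrix (Fin n ⊕ Fin m) (Fin n ⊕ Fin m) ℂ) :
    Bbd n m * M * (Bbd n m)ᴴ = M.toBlocks₂₂ := by
  conv_lhs => rw [← fromBlocks_toBlocks M]
  rw [conjTranspose_Bbd, Bbd_eq_fromCols, fromCols_mul_fromBlocks, fromCols_mul_fromRows]
  simp

theorem conjTranspose_Bbd_mul_mul_Bbd (T : Matrix (Fin m) (Fin m) ℂ) :
    (Bbd n m)ᴴ * T * Bbd n m = fromBlocks 0 0 0 T := by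
  rw [conjTranspose_Bbd, Bbd_eq_fromCols, fromRows_mul, fromRows_mul_fromCols]
  simp

end Boundary

/-- Cayley-transform form of the scattering matrix: with `A` block-partitioned,
`A_II` invertible and `Ã = T⁻¹(A_BB − A_BI A_II⁻¹ A_IB)`, the matrix `Ã − iId` is
invertible and `S = B(A − iBᴴTB)⁻¹(A + iBᴴTB)Bᴴ = (Ã − iId)⁻¹(Ã + iId)`. -/
theorem stmt11 {n m : ℕ} (AII : Matrix (Fin n) (Fin n) ℂ)
    (AIB : Matrix (Fin n) (Fin m) ℂ) (ABI : Matrix (Fin m) (Fin n) ℂ)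
    (ABB T : Matrix (Fin m) (Fin m) ℂ)
    (hAII : IsUnit AII) (hT : IsUnit T)
    (A : Matrix (Fin n ⊕ Fin m) (Fin n ⊕ Fin m) ℂ)
    (hA : A = Matrix.fromBlocks AII AIB ABI ABB)
    (hinv : IsUnit (A - Complex.I • ((Bbd n m)ᴴ * T * Bbd n m)))
    (Atil : Matrix (Fin m) (Fin m) ℂ)
    (hAtil : Atil = T⁻¹ * (ABB - ABI * AII⁻¹ * AIB)) :
    IsUnit (Atil - Complex.I • (1 : Matrix (Fin m) (Fin m) ℂ)) ∧
    Bbd n m * (A - Complex.I • ((Bbd n m)ᴴ * T * Bbd n m))⁻¹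
        * (A + Complex.I • ((Bbd n m)ᴴ * T * Bbd n m)) * (Bbd n m)ᴴ
      = (Atil - Complex.I • (1 : Matrix (Fin m) (Fin m) ℂ))⁻¹
        * (Atil + Complex.I • (1 : Matrix (Fin m) (Fin m) ℂ)) := by
  have hTdet : IsUnit T.det := (isUnit_iff_isUnit_det T).mp hT
  have hblocks : A - Complex.I • ((Bbd n m)ᴴ * T * Bbd n m)
      = fromBlocks AII AIB ABI (ABB - Complex.I • T) := by
    rw [hA, conjTranspose_Bbd_mul_mul_Bbd, fromBlocks_smul, sub_eq_add_neg, fromBlocks_neg,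
      fromBlocks_add]
    simp [sub_eq_add_neg]
  have hschur : (ABB - Complex.I • T) - ABI * AII⁻¹ * AIB = T * (Atil - Complex.I • 1) := by
    rw [hAtil, Matrix.mul_sub, ← Matrix.mul_assoc, mul_nonsing_inv T hTdet, Matrix.one_mul,
      mul_smul_comm, Matrix.mul_one]
    abel
  have hunit : IsUnit (Atil - Complex.I • 1) := by
    let := hAII.invertible
    rw [hblocks, isUnit_fromBlocks_iff_of_invertible₁₁, invOf_eq_nonsing_inv, hschur] at hinv
    exact isUnit_of_mul_isUnit_right hinv
  refine ⟨hunit, ?_⟩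
  rw [mul_inv_sub_smul_mul_add_smul_mul _ _ _ _ _ (Bbd_mul_conjTranspose_Bbd n m) hinv,
    Bbd_mul_mul_conjTranspose_Bbd, hblocks, toBlocks₂₂_inv_fromBlocks hAII (hblocks ▸ hinv),
    hschur, Matrix.mul_inv_rev, Matrix.mul_assoc, nonsing_inv_mul T hTdet,
    Matrix.mul_one, inv_sub_smul_one_mul_add_smul_one hunit]
end

section
/- Explicit projector for multiplicity-two skeletons: suppose each skeleton edge e has exactly two owners j₋(e) < j₊(e) and T is block diagonal respecting interfaces as in the diagonal/averaging hypothesis. Then the T-orthogonal projection P onto single traces acts by averaging, (Pu)_{j±(e),e} = (u_{j₋(e),e} + u_{j₊(e),e})/2, and the communication matrix Π = 2P − Id acts by swapping, (Πu)_{j₋(e),e} = u_{j₊(e),e} and (Πu)_{j₊(e),e} = u_{j₋(e),e}; in particular P and Π are independent of T. -/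
/-!
The interface hypotheses say precisely that `T = B ⊗ 1` for a block `B` on single traces,
so `T` commutes with the averaging matrix `1 ⊗ (J / 2)`, which is therefore a `T`-self-adjoint
idempotent with range the single traces. Positive definiteness of `T` makes such a projection
unique, so `P` is the averaging matrix and `2P - 1` swaps the two copies.
-/

open Matrix ComplexOrder

open scoped Kronecker

namespace Matrix

variable {n R : Type*} [Fintype n]

theorem mulVec_eq_self_of_mem_range [Semiring R] {M : Matrix n n R} (hM : M * M = M)
    {v : n → R} (hv : v ∈ Set.range M.mulVec) : M *ᵥ v = v := by
  obtain ⟨x, rfl⟩ := hv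
  rw [mulVec_mulVec, hM]

theorem star_dotProduct_mulVec_mulVec_of_mul_eq [CommSemiring R] [StarRing R]
    {T A : Matrix n n R} (h : T * A = Aᴴ * T) (x y : n → R) :
    star y ⬝ᵥ T *ᵥ (A *ᵥ x) = star (A *ᵥ y) ⬝ᵥ T *ᵥ x := by
  rw [mulVec_mulVec, star_mulVec, dotProduct_mulVec, dotProduct_mulVec, vecMul_vecMul, h]

/-- A `T`-orthogonal projection is determined by its range. -/
theorem PosDef.eq_of_range_eq_of_idempotent [Ring R] [PartialOrder R] [StarRing R]
    {T P A : Matrix n n R} (hT : T.PosDef)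
    (hP : P * P = P) (hA : A * A = A) (hrange : Set.range P.mulVec = Set.range A.mulVec)
    (hPT : ∀ x y, star y ⬝ᵥ T *ᵥ (P *ᵥ x) = star (P *ᵥ y) ⬝ᵥ T *ᵥ x)
    (hAT : ∀ x y, star y ⬝ᵥ T *ᵥ (A *ᵥ x) = star (A *ᵥ y) ⬝ᵥ T *ᵥ x) : P = A := by
  refine ext_iff_mulVec.mpr fun u => ?_
  set w := P *ᵥ u - A *ᵥ u
  have hPu : P *ᵥ u ∈ Set.range A.mulVec := hrange ▸ ⟨u, rfl⟩
  have hAu : A *ᵥ u ∈ Set.range P.mulVec := hrange ▸ ⟨u, rfl⟩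
  have hPw : P *ᵥ w = w := by
    rw [mulVec_sub, mulVec_eq_self_of_mem_range hP ⟨u, rfl⟩, mulVec_eq_self_of_mem_range hP hAu]
  have hAw : A *ᵥ w = w := by
    rw [mulVec_sub, mulVec_eq_self_of_mem_range hA hPu, mulVec_eq_self_of_mem_range hA ⟨u, rfl⟩]
  have hw : star w ⬝ᵥ T *ᵥ w = 0 :=
    calc star w ⬝ᵥ T *ᵥ w
        = star w ⬝ᵥ T *ᵥ (P *ᵥ u) - star w ⬝ᵥ T *ᵥ (A *ᵥ u) := by
          rw [mulVec_sub, dotProduct_sub]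
      _ = star (P *ᵥ w) ⬝ᵥ T *ᵥ u - star (A *ᵥ w) ⬝ᵥ T *ᵥ u := by rw [hPT, hAT]
      _ = 0 := by rw [hPw, hAw, sub_self]
  by_contra h
  exact (hT.dotProduct_mulVec_pos (sub_ne_zero.mpr h)).ne' hw

end Matrix

noncomputable def averaging (σ : Type*) [DecidableEq σ] : Matrix (σ × Bool) (σ × Bool) ℂ :=
  (1 : Matrix σ σ ℂ) ⊗ₖ of fun _ _ => (2⁻¹ : ℂ)

def duplication (σ : Type*) [DecidableEq σ] : Matrix (σ × Bool) σ ℂ :=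
  of fun p e => if p.1 = e then 1 else 0

section TwoCopies

variable {σ : Type*}

theorem eq_kronecker_one_of_interface_blocks {jm jp : σ → ℕ}
    {T : Matrix (σ × Bool) (σ × Bool) ℂ}
    (hzero : ∀ (e e' : σ) (s s' : Bool),
      (¬(jm e = jm e' ∧ jp e = jp e') ∨ s ≠ s') → T (e, s) (e', s') = 0)
    (hsame : ∀ e e' : σ, jm e = jm e' → jp e = jp e' →
      T (e, false) (e', false) = T (e, true) (e', true)) :
    T = (of fun e e' => T (e, false) (e', false)) ⊗ₖ (1 : Matrix Bool Bool ℂ) := by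
  ext ⟨e, s⟩ ⟨e', s'⟩
  by_cases hs : s = s'
  · subst hs
    by_cases hj : jm e = jm e' ∧ jp e = jp e'
    · cases s <;> simp [hsame e e' hj.1 hj.2]
    · simp [hzero e e' _ _ (.inl hj)]
  · simp [hs, hzero e e' s s' (.inr hs)]

variable [DecidableEq σ]

theorem conjTranspose_averaging : (averaging σ)ᴴ = averaging σ := by
  rw [averaging, conjTranspose_kronecker, conjTranspose_one]
  congr
  ext
  simp

variable [Fintype σ]

theorem averaging_mulVec_apply (u : σ × Bool → ℂ) (e : σ) (s : Bool) :
    (averaging σ *ᵥ u) (e, s) = (u (e, false) + u (e, true)) / 2 := by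
  simp only [mulVec, dotProduct, averaging, kroneckerMap_apply, one_apply, of_apply, ite_mul,
    one_mul, zero_mul, Fintype.sum_prod_type, Fintype.sum_bool, Finset.sum_add_distrib,
    Finset.sum_ite_eq, Finset.mem_univ, ↓reduceIte]
  ring

theorem duplication_mulVec_apply (z : σ → ℂ) (p : σ × Bool) :
    (duplication σ *ᵥ z) p = z p.1 := by
  simp [duplication, mulVec, dotProduct]

theorem averaging_mulVec (u : σ × Bool → ℂ) :
    averaging σ *ᵥ u = duplication σ *ᵥ fun e => (u (e, false) + u (e, true)) / 2 := by
  ext ⟨e, s⟩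
  rw [averaging_mulVec_apply, duplication_mulVec_apply]

theorem averaging_mulVec_duplication_mulVec (z : σ → ℂ) :
    averaging σ *ᵥ (duplication σ *ᵥ z) = duplication σ *ᵥ z := by
  ext ⟨e, s⟩
  simp only [averaging_mulVec_apply, duplication_mulVec_apply]
  ring

theorem range_averaging_mulVec :
    Set.range (averaging σ).mulVec = Set.range (duplication σ).mulVec := by
  apply subset_antisymm
  · rintro _ ⟨u, rfl⟩
    exact ⟨_, (averaging_mulVec u).symm⟩
  · rintro _ ⟨z, rfl⟩
    exact ⟨_, averaging_mulVec_duplication_mulVec z⟩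

theorem averaging_mul_self : averaging σ * averaging σ = averaging σ := by
  rw [averaging, ← mul_kronecker_mul, one_mul]
  congr
  ext
  simp [mul_apply]

theorem kronecker_one_mul_averaging (B : Matrix σ σ ℂ) :
    (B ⊗ₖ (1 : Matrix Bool Bool ℂ)) * averaging σ = averaging σ * (B ⊗ₖ 1) := by
  rw [averaging, ← mul_kronecker_mul, ← mul_kronecker_mul, mul_one, one_mul, one_mul, mul_one]

theorem two_smul_averaging_sub_one_mulVec_apply (u : σ × Bool → ℂ) (e : σ) (s : Bool) :
    (((2 : ℂ) • averaging σ - 1) *ᵥ u) (e, s) = u (e, !s) := by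
  rw [sub_mulVec, smul_mulVec, one_mulVec, Pi.sub_apply, Pi.smul_apply, averaging_mulVec_apply]
  cases s <;> simp only [smul_eq_mul, Bool.not_false, Bool.not_true] <;> ring

end TwoCopies

theorem stmt19_general {σ : Type*} [Fintype σ] [DecidableEq σ]
    (jm jp : σ → ℕ)
    (Q : Matrix (σ × Bool) σ ℂ)
    (hQ : ∀ (e : σ) (s : Bool) (e' : σ),
      Q (e, s) e' = if e = e' then 1 else 0)
    (T : Matrix (σ × Bool) (σ × Bool) ℂ) (hT : T.PosDef)
    (hzero : ∀ (e e' : σ) (s s' : Bool),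
      (¬(jm e = jm e' ∧ jp e = jp e') ∨ s ≠ s') → T (e, s) (e', s') = 0)
    (hsame : ∀ e e' : σ, jm e = jm e' → jp e = jp e' →
      T (e, false) (e', false) = T (e, true) (e', true))
    (P : Matrix (σ × Bool) (σ × Bool) ℂ)
    (hPidem : P * P = P)
    (hPrange : Set.range P.mulVec = Set.range Q.mulVec)
    (hPsa : ∀ x y : (σ × Bool) → ℂ,
      star y ⬝ᵥ T *ᵥ (P *ᵥ x) = star (P *ᵥ y) ⬝ᵥ T *ᵥ x) :
    ∀ (u : (σ × Bool) → ℂ) (e : σ) (s : Bool),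
      (P *ᵥ u) (e, s) = (u (e, false) + u (e, true)) / 2 ∧
      (((2:ℂ) • P - 1) *ᵥ u) (e, false) = u (e, true) ∧
      (((2:ℂ) • P - 1) *ᵥ u) (e, true) = u (e, false) := by
  have hQdup : Q = duplication σ := by
    ext ⟨e, s⟩ e'
    exact hQ e s e'
  have hTavg : T * averaging σ = (averaging σ)ᴴ * T := by
    rw [conjTranspose_averaging, eq_kronecker_one_of_interface_blocks hzero hsame]
    exact kronecker_one_mul_averaging _
  obtain rfl : P = averaging σ :=
    hT.eq_of_range_eq_of_idempotent hPidem averaging_mul_self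
      (by rw [hPrange, hQdup, range_averaging_mulVec]) hPsa
      (star_dotProduct_mulVec_mulVec_of_mul_eq hTavg)
  intro u e s
  exact ⟨averaging_mulVec_apply u e s, two_smul_averaging_sub_one_mulVec_apply u e false,
    two_smul_averaging_sub_one_mulVec_apply u e true⟩

/-- Explicit projector for multiplicity-two skeletons: each skeleton edge `e` has exactly
two owners `jm e < jp e`; the multi-trace space is indexed by `σ × Bool`
(`false` = copy owned by `jm e`, `true` = copy owned by `jp e`); `Q` duplicates a single
trace into both copies. If `T` is positive definite, block diagonal respecting interfaces
(entries vanish unless the two edges are shared by the same pair of subdomains and the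
copies belong to the same side), with the shared blocks agreeing across the two subdomains,
then the `T`-orthogonal projection `P` onto `range(Q)` acts by averaging and the
communication matrix `Π = 2P − Id` acts by swapping; in particular they are independent
of `T`. -/
theorem stmt19 {σ : Type*} [Fintype σ] [DecidableEq σ]
    (jm jp : σ → ℕ) (hlt : ∀ e, jm e < jp e)
    (Q : Matrix (σ × Bool) σ ℂ)
    (hQ : ∀ (e : σ) (s : Bool) (e' : σ),
      Q (e, s) e' = if e = e' then 1 else 0)
    (T : Matrix (σ × Bool) (σ × Bool) ℂ) (hT : T.PosDef)
    (hzero : ∀ (e e' : σ) (s s' : Bool),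
      (¬(jm e = jm e' ∧ jp e = jp e') ∨ s ≠ s') → T (e, s) (e', s') = 0)
    (hsame : ∀ e e' : σ, jm e = jm e' → jp e = jp e' →
      T (e, false) (e', false) = T (e, true) (e', true))
    (P : Matrix (σ × Bool) (σ × Bool) ℂ)
    (hPidem : P * P = P)
    (hPrange : Set.range P.mulVec = Set.range Q.mulVec)
    (hPsa : ∀ x y : (σ × Bool) → ℂ,
      star y ⬝ᵥ T *ᵥ (P *ᵥ x) = star (P *ᵥ y) ⬝ᵥ T *ᵥ x) :
    ∀ (u : (σ × Bool) → ℂ) (e : σ) (s : Bool),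
      (P *ᵥ u) (e, s) = (u (e, false) + u (e, true)) / 2 ∧
      (((2:ℂ) • P - 1) *ᵥ u) (e, false) = u (e, true) ∧
      (((2:ℂ) • P - 1) *ᵥ u) (e, true) = u (e, false) :=
  stmt19_general jm jp Q hQ T hT hzero hsame P hPidem hPrange hPsa
end
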